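/- (q-Saalschütz corollary) For all integers L, M ≥ 0: Σ_{i=0}^M q^{i(2i-1)/2} [L+M-i choose L]_q [L+1 choose 2i]_{q^{1/2}} = [L+2M choose L]_{q^{1/2}}. -/
import Mathlib


open Finset

noncomputable section

/-- The field of rational functions over ℚ in which the identities are stated. -/
abbrev K : Type := RatFunc ℚ

/-- The variable. -/
def tq : K := RatFunc.X

/-- Gaussian binomial coefficient `[n choose k]` in the variable `p`:
`∏_{j=1}^{k} (1 - p^(n-k+j))/(1 - p^j)` when `0 ≤ k ≤ n`, and `0` otherwise. -/
def gb (p : K) (n k : ℤ) : K :=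
  if 0 ≤ k ∧ k ≤ n then
    ∏ j ∈ Finset.range k.toNat, (1 - p ^ (n - k + 1 + (j : ℤ))) / (1 - p ^ (1 + (j : ℤ)))
  else 0


lemma tq_ne_zero : tq ≠ 0 := RatFunc.X_ne_zero

lemma one_sub_tq_zpow_ne (m : ℤ) (hm : 1 ≤ m) : (1 : K) - tq ^ m ≠ 0 := by
  intro h
  have hxm : tq ^ m = 1 := by linear_combination -h
  lift m to ℕ using le_trans zero_le_one hm with n
  rw [zpow_natCast] at hxm
  have h2 : (Polynomial.X : Polynomial ℚ) ^ n = 1 := by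
    apply RatFunc.algebraMap_injective ℚ
    rw [map_pow, map_one, RatFunc.algebraMap_X]
    exact hxm
  have h3 := congrArg Polynomial.natDegree h2
  simp [Polynomial.natDegree_X_pow] at h3
  omega

lemma one_sub_tq2_zpow_ne (m : ℤ) (hm : 1 ≤ m) : (1 : K) - (tq ^ 2) ^ m ≠ 0 := by
  have : (tq ^ 2 : K) ^ m = tq ^ (2 * m) := by
    rw [← zpow_natCast tq 2, ← zpow_mul]; norm_num
  rw [this]
  exact one_sub_tq_zpow_ne _ (by omega)

lemma tq2_ne_zero : (tq ^ 2 : K) ≠ 0 := pow_ne_zero _ tq_ne_zero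

section gbLemmas

variable {p : K}

lemma gb_of_neg {n k : ℤ} (h : k < 0) : gb p n k = 0 := by
  rw [gb, if_neg]; omega

lemma gb_of_gt {n k : ℤ} (h : n < k) : gb p n k = 0 := by
  rw [gb, if_neg]; omega

lemma gb_def {n k : ℤ} (h0 : 0 ≤ k) (hn : k ≤ n) :
    gb p n k = (∏ j ∈ Finset.range k.toNat, (1 - p ^ (n - k + 1 + (j : ℤ)))) /
      (∏ j ∈ Finset.range k.toNat, (1 - p ^ (1 + (j : ℤ)))) := by
  rw [gb, if_pos ⟨h0, hn⟩, Finset.prod_div_distrib]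

lemma gb_zero {n : ℤ} (hn : 0 ≤ n) : gb p n 0 = 1 := by
  rw [gb, if_pos ⟨le_refl 0, hn⟩]
  simp

lemma gb_diag (hp : ∀ m : ℤ, 1 ≤ m → (1 : K) - p ^ m ≠ 0) {n : ℤ} (hn : 0 ≤ n) :
    gb p n n = 1 := by
  rw [gb, if_pos ⟨hn, le_refl n⟩]
  apply Finset.prod_eq_one
  intro j _
  rw [show n - n + 1 + (j : ℤ) = 1 + j by ring]
  exact div_self (hp _ (by omega))

lemma gb_top {n k : ℤ} (h0 : 0 ≤ k) (hkn : k ≤ n) :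
    (1 - p ^ (n - k)) * gb p n k = (1 - p ^ n) * gb p (n - 1) k := by
  rcases eq_or_lt_of_le hkn with heq | hlt
  · subst heq
    rw [gb_of_gt (by omega : k - 1 < k)]
    simp
  · have hkn1 : k ≤ n - 1 := by omega
    rw [gb_def h0 hkn, gb_def h0 hkn1]
    rw [mul_div_assoc', mul_div_assoc']
    congr 1
    have hK : ((k.toNat : ℤ)) = k := Int.toNat_of_nonneg h0
    have e1 : ∀ j ∈ Finset.range k.toNat, (1 - p ^ (n - k + 1 + (j : ℤ)))
        = (fun j : ℕ => 1 - p ^ (n - k + (j : ℤ))) (j + 1) := by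
      intro j _; simp only []; congr 2; push_cast; ring
    have e2 : ∀ j ∈ Finset.range k.toNat, (1 - p ^ (n - 1 - k + 1 + (j : ℤ)))
        = (fun j : ℕ => 1 - p ^ (n - k + (j : ℤ))) j := by
      intro j _; simp only []; congr 2; ring
    rw [Finset.prod_congr rfl e1, Finset.prod_congr rfl e2]
    calc (1 - p ^ (n - k)) * ∏ x ∈ Finset.range k.toNat, (fun j : ℕ => 1 - p ^ (n - k + (j:ℤ))) (x + 1)
        = (∏ x ∈ Finset.range k.toNat, (fun j : ℕ => 1 - p ^ (n - k + (j:ℤ))) (x + 1)) *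
            (fun j : ℕ => 1 - p ^ (n - k + (j:ℤ))) 0 := by
          rw [mul_comm]; norm_num
      _ = ∏ x ∈ Finset.range (k.toNat + 1), (fun j : ℕ => 1 - p ^ (n - k + (j:ℤ))) x := by
          rw [Finset.prod_range_succ']
      _ = (∏ x ∈ Finset.range k.toNat, (fun j : ℕ => 1 - p ^ (n - k + (j:ℤ))) x) *
            (fun j : ℕ => 1 - p ^ (n - k + (j:ℤ))) k.toNat := by
          rw [Finset.prod_range_succ]
      _ = (1 - p ^ n) * ∏ j ∈ Finset.range k.toNat, (1 - p ^ (n - k + (j:ℤ))) := by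
          show _ * (1 - p ^ (n - k + (k.toNat:ℤ))) = _
          rw [show n - k + (k.toNat : ℤ) = n by omega, mul_comm]

lemma gb_col (hp : ∀ m : ℤ, 1 ≤ m → (1 : K) - p ^ m ≠ 0) {n k : ℤ} (h1 : 1 ≤ k) (hkn : k ≤ n) :
    (1 - p ^ k) * gb p n k = (1 - p ^ (n - k + 1)) * gb p n (k - 1) := by
  rw [gb_def (by omega) hkn, gb_def (by omega) (by omega : k - 1 ≤ n)]
  have hK : k.toNat = (k - 1).toNat + 1 := by omega
  rw [hK, Finset.prod_range_succ' (fun j : ℕ => (1 - p ^ (n - k + 1 + (j : ℤ)))),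
    Finset.prod_range_succ (fun j : ℕ => (1 - p ^ (1 + (j : ℤ))))]
  show _ * ((_ / (_ * (1 - p ^ ((1:ℤ) + ((k-1).toNat : ℤ))))) ) = _
  rw [show (1 : ℤ) + (((k-1).toNat : ℕ) : ℤ) = k by omega]
  push_cast
  rw [show n - k + 1 + 0 = n - k + 1 by ring]
  have hnum : ∀ j ∈ Finset.range (k-1).toNat, (1 - p ^ (n - k + 1 + ((j : ℤ) + 1)))
      = (1 - p ^ (n - (k-1) + 1 + (j : ℤ))) := by
    intro j _; congr 2; ring
  rw [Finset.prod_congr rfl hnum]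
  rw [mul_comm (∏ j ∈ Finset.range (k-1).toNat, (1 - p ^ (1 + (j : ℤ)))) (1 - p ^ k)]
  rw [mul_div_assoc']
  rw [mul_div_mul_left _ _ (hp k h1)]
  rw [mul_div_assoc', mul_comm]

end gbLemmas

section pascal

variable {p : K}

lemma gb_pascal1 (hp : ∀ m : ℤ, 1 ≤ m → (1 : K) - p ^ m ≠ 0) (hp0 : p ≠ 0)
    {n : ℤ} (k : ℤ) (hn : 0 ≤ n) :
    gb p (n + 1) k = gb p n k + p ^ (n + 1 - k) * gb p n (k - 1) := by
  rcases lt_or_ge k 0 with hk | hk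
  · rw [gb_of_neg hk, gb_of_neg hk, gb_of_neg (by omega : k - 1 < 0)]
    simp
  rcases eq_or_lt_of_le hk with heq | hk1
  · -- k = 0
    rw [← heq, gb_zero (by omega), gb_zero hn, gb_of_neg (by omega : (0:ℤ) - 1 < 0)]
    simp
  rcases lt_or_ge n (k - 1) with hgt | hkn1
  · -- k > n + 1
    rw [gb_of_gt (by omega : n + 1 < k), gb_of_gt (by omega : n < k),
      gb_of_gt (by omega : n < k - 1)]
    simp
  rcases eq_or_lt_of_le hkn1 with heq | hlt
  · -- k = n + 1
    rw [← heq]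
    rw [show k - 1 + 1 = k by ring]
    rw [gb_diag hp (by omega), gb_of_gt (by omega : k - 1 < k), gb_diag hp (by omega)]
    rw [show k - k = (0:ℤ) by ring]
    simp
  · -- 1 ≤ k ≤ n
    have hkn : k ≤ n := by omega
    have hcancel : (1 : K) - p ^ (n + 1 - k) ≠ 0 := hp _ (by omega)
    apply mul_left_cancel₀ hcancel
    have ht := gb_top (p := p) (n := n + 1) (k := k) (by omega) (by omega)
    rw [show n + 1 - 1 = n by ring] at ht
    rw [show n + 1 - k = n - k + 1 by ring] at ht ⊢
    rw [ht]
    have hc := gb_col hp (p := p) (n := n) (k := k) (by omega) hkn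
    have hpow : p ^ (n - k + 1) * p ^ k = p ^ (n + 1) := by
      rw [← zpow_add₀ hp0]; ring_nf
    calc (1 - p ^ (n + 1)) * gb p n k
        = (1 - p ^ (n - k + 1)) * gb p n k + p ^ (n - k + 1) * ((1 - p ^ k) * gb p n k) := by
          rw [← hpow]; ring
      _ = (1 - p ^ (n - k + 1)) * gb p n k + p ^ (n - k + 1) *
            ((1 - p ^ (n - k + 1)) * gb p n (k - 1)) := by rw [hc]
      _ = (1 - p ^ (n - k + 1)) * (gb p n k + p ^ (n - k + 1) * gb p n (k - 1)) := by ring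

lemma gb_pascal2 (hp : ∀ m : ℤ, 1 ≤ m → (1 : K) - p ^ m ≠ 0) (hp0 : p ≠ 0)
    {n : ℤ} (k : ℤ) (hn : 0 ≤ n) :
    gb p (n + 1) k = p ^ k * gb p n k + gb p n (k - 1) := by
  rcases lt_or_ge k 0 with hk | hk
  · rw [gb_of_neg hk, gb_of_neg hk, gb_of_neg (by omega : k - 1 < 0)]
    simp
  rcases eq_or_lt_of_le hk with heq | hk1
  · rw [← heq, gb_zero (by omega), gb_zero hn, gb_of_neg (by omega : (0:ℤ) - 1 < 0)]
    simp
  rcases lt_or_ge n (k - 1) with hgt | hkn1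
  · rw [gb_of_gt (by omega : n + 1 < k), gb_of_gt (by omega : n < k),
      gb_of_gt (by omega : n < k - 1)]
    simp
  rcases eq_or_lt_of_le hkn1 with heq | hlt
  · rw [← heq]
    rw [show k - 1 + 1 = k by ring]
    rw [gb_diag hp (by omega), gb_of_gt (by omega : k - 1 < k), gb_diag hp (by omega)]
    simp
  · have hkn : k ≤ n := by omega
    have hcancel : (1 : K) - p ^ (n + 1 - k) ≠ 0 := hp _ (by omega)
    apply mul_left_cancel₀ hcancel
    have ht := gb_top (p := p) (n := n + 1) (k := k) (by omega) (by omega)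
    rw [show n + 1 - 1 = n by ring] at ht
    rw [show n + 1 - k = n - k + 1 by ring] at ht ⊢
    rw [ht]
    have hc := gb_col hp (p := p) (n := n) (k := k) (by omega) hkn
    have hpow : p ^ (n - k + 1) * p ^ k = p ^ (n + 1) := by
      rw [← zpow_add₀ hp0]; ring_nf
    calc (1 - p ^ (n + 1)) * gb p n k
        = p ^ k * ((1 - p ^ (n - k + 1)) * gb p n k) + (1 - p ^ k) * gb p n k := by
          rw [← hpow]; ring
      _ = p ^ k * ((1 - p ^ (n - k + 1)) * gb p n k) +
            (1 - p ^ (n - k + 1)) * gb p n (k - 1) := by rw [hc]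
      _ = (1 - p ^ (n - k + 1)) * (p ^ k * gb p n k + gb p n (k - 1)) := by ring

end pascal

/-- Summand of the main sum. -/
def Aa (L M i : ℕ) : K :=
  tq ^ (i * (2 * i - 1)) * gb (tq ^ 2) ((L : ℤ) + M - i) L * gb tq ((L : ℤ) + 1) (2 * i)

def Bb (L M i : ℕ) : K :=
  tq ^ (i * (2 * i + 1)) * gb (tq ^ 2) ((L : ℤ) + M - i) L * gb tq ((L : ℤ) + 1) (2 * i + 1)

def Cc (L M i : ℕ) : K :=
  tq ^ (i * (2 * i - 1)) * gb (tq ^ 2) ((L : ℤ) + M - i) L * gb tq (L : ℤ) (2 * i - 1)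

def Dd (L M i : ℕ) : K :=
  tq ^ (i * (2 * i + 1)) * gb (tq ^ 2) ((L : ℤ) + M - i) L * gb tq (L : ℤ) (2 * i)

lemma tq_pow_helper1 (i : ℕ) : tq ^ (i * (2 * i + 1)) = tq ^ (i * (2 * i - 1)) * tq ^ (2 * i) := by
  rw [← pow_add]
  congr 1
  cases i with
  | zero => rfl
  | succ j => rw [show 2 * (j + 1) - 1 = 2 * j + 1 by omega]; ring

lemma tq_pow_helper2 (i : ℕ) : tq ^ ((i + 1) * (2 * (i + 1) - 1)) = tq ^ ((i + 1) * (2 * i + 1)) := by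
  rw [show 2 * (i + 1) - 1 = 2 * i + 1 by omega]

lemma q2_zpow_nat (d : ℕ) : ((tq ^ 2 : K)) ^ ((d : ℕ) : ℤ) = tq ^ (2 * d) := by
  rw [zpow_natCast]; ring

lemma lemA (L M i : ℕ) : Aa L M i = Dd L M i + Cc L M i := by
  unfold Aa Dd Cc
  rw [gb_pascal2 one_sub_tq_zpow_ne tq_ne_zero (n := (L : ℤ)) (2 * (i : ℤ))
    (Int.natCast_nonneg L)]
  rw [show (2 * (i : ℤ)) = ((2 * i : ℕ) : ℤ) by push_cast; ring, zpow_natCast]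
  rw [tq_pow_helper1 i]
  ring

lemma lemB (L M i : ℕ) (hi : i ≤ M) :
    Bb (L + 1) M i = Dd (L + 1) M i + Cc (L + 1) M (i + 1) + tq ^ (2 * M + 1) * Bb L M i := by
  obtain ⟨d, rfl⟩ : ∃ d, M = i + d := ⟨M - i, by omega⟩
  unfold Bb Dd Cc
  push_cast
  rw [gb_pascal2 one_sub_tq_zpow_ne tq_ne_zero (n := (L : ℤ) + 1) (2 * (i : ℤ) + 1)
    (by positivity)]
  rw [show (2 * (i : ℤ) + 1 - 1) = 2 * (i : ℤ) by ring]
  rw [show (L : ℤ) + 1 + ((i : ℤ) + d) - i = ((L : ℤ) + ((i : ℤ) + d) - i) + 1 by ring]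
  rw [gb_pascal1 one_sub_tq2_zpow_ne tq2_ne_zero (n := (L : ℤ) + ((i : ℤ) + d) - i)
    ((L : ℤ) + 1) (by omega)]
  rw [show (L : ℤ) + ((i : ℤ) + d) - i + 1 - ((L : ℤ) + 1) = ((d : ℕ) : ℤ) by push_cast; ring]
  rw [show (L : ℤ) + 1 - 1 = (L : ℤ) by ring]
  rw [q2_zpow_nat d]
  rw [show (2 * (i : ℤ) + 1) = ((2 * i + 1 : ℕ) : ℤ) by push_cast; ring, zpow_natCast]
  rw [tq_pow_helper2 i]
  rw [show (L : ℤ) + 1 + ((i : ℤ) + d) - ((i : ℤ) + 1) = (L : ℤ) + ((i : ℤ) + d) - (i : ℤ) by ring]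
  rw [show 2 * ((i : ℤ) + 1) - 1 = ((2 * i + 1 : ℕ) : ℤ) by push_cast; ring]
  ring


lemma lemC (L M i : ℕ) (hi : i ≤ M + 1) :
    Bb (L + 1) (M + 1) i =
      Bb (L + 1) M i + tq ^ (2 * M + 2) * Aa L (M + 1) i + tq ^ (2 * M + 3) * Bb L (M + 1) i := by
  obtain ⟨d, hd⟩ : ∃ d, M + 1 = i + d := ⟨M + 1 - i, by omega⟩
  unfold Bb Aa
  push_cast
  rw [show (L : ℤ) + 1 + ((M : ℤ) + 1) - i = ((L : ℤ) + 1 + M - i) + 1 by ring]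
  rw [gb_pascal1 one_sub_tq2_zpow_ne tq2_ne_zero (n := (L : ℤ) + 1 + M - i)
    ((L : ℤ) + 1) (by omega)]
  rw [show (L : ℤ) + 1 + M - i + 1 - ((L : ℤ) + 1) = ((d : ℕ) : ℤ) by omega]
  rw [q2_zpow_nat d]
  rw [show (L : ℤ) + 1 - 1 = (L : ℤ) by ring]
  rw [gb_pascal2 one_sub_tq_zpow_ne tq_ne_zero (n := (L : ℤ) + 1) (2 * (i : ℤ) + 1)
    (by positivity)]
  rw [show (2 * (i : ℤ) + 1 - 1) = 2 * (i : ℤ) by ring]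
  rw [show (2 * (i : ℤ) + 1) = ((2 * i + 1 : ℕ) : ℤ) by push_cast; ring, zpow_natCast]
  rw [show (L : ℤ) + 1 + M - i = (L : ℤ) + ((M : ℤ) + 1) - i by ring]
  rw [tq_pow_helper1 i]
  rw [show 2 * M + 2 = 2 * i + 2 * d by omega, show 2 * M + 3 = 2 * i + 2 * d + 1 by omega]
  ring

def Fs (L M : ℕ) : K := ∑ i ∈ Finset.range (M + 1), Aa L M i
def Gg (L M : ℕ) : K := ∑ i ∈ Finset.range (M + 1), Bb L M i

lemma Bb_vanish_top (L M : ℕ) : Bb L M (M + 1) = 0 := by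
  unfold Bb
  rw [show (L : ℤ) + (M : ℤ) - ((M + 1 : ℕ) : ℤ) = (L : ℤ) - 1 by push_cast; ring,
    gb_of_gt (by omega : (L : ℤ) - 1 < (L : ℤ))]
  ring

lemma Cc_vanish0 (L M : ℕ) : Cc L M 0 = 0 := by
  unfold Cc
  rw [gb_of_neg (by norm_num : 2 * ((0 : ℕ) : ℤ) - 1 < 0)]
  ring

lemma Cc_vanish_top (L M : ℕ) : Cc L M (M + 1) = 0 := by
  unfold Cc
  rw [show (L : ℤ) + (M : ℤ) - ((M + 1 : ℕ) : ℤ) = (L : ℤ) - 1 by push_cast; ring,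
    gb_of_gt (by omega : (L : ℤ) - 1 < (L : ℤ))]
  ring

lemma sum1 (L M : ℕ) : Fs (L + 1) M = Gg (L + 1) M - tq ^ (2 * M + 1) * Gg L M := by
  unfold Fs Gg
  rw [Finset.sum_congr rfl (fun i _ => lemA (L + 1) M i),
    Finset.sum_congr rfl (fun i hi => lemB L M i (by
      simp only [Finset.mem_range] at hi; omega))]
  rw [Finset.sum_add_distrib, Finset.sum_add_distrib, Finset.sum_add_distrib, ← Finset.mul_sum]
  have tele : ∑ i ∈ Finset.range (M + 1), (Cc (L + 1) M i - Cc (L + 1) M (i + 1)) = 0 := by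
    rw [Finset.sum_range_sub' (fun i => Cc (L + 1) M i) (M + 1)]
    rw [Cc_vanish0, Cc_vanish_top]
    ring
  rw [Finset.sum_sub_distrib] at tele
  linear_combination tele

lemma sum2 (L M : ℕ) :
    Gg (L + 1) (M + 1) =
      Gg (L + 1) M + tq ^ (2 * M + 2) * Fs L (M + 1) + tq ^ (2 * M + 3) * Gg L (M + 1) := by
  unfold Fs Gg
  rw [Finset.sum_congr rfl (fun i hi => lemC L M i (by
    simp only [Finset.mem_range] at hi; omega))]
  rw [Finset.sum_add_distrib, Finset.sum_add_distrib, ← Finset.mul_sum, ← Finset.mul_sum]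
  rw [Finset.sum_range_succ (fun i => Bb (L + 1) M i) (M + 1), Bb_vanish_top]
  ring

lemma Fs0 (M : ℕ) : Fs 0 M = 1 := by
  unfold Fs
  rw [Finset.sum_eq_single 0]
  · unfold Aa
    push_cast
    rw [gb_zero (by omega), gb_zero (by omega)]
    norm_num
  · intro i hi hne
    unfold Aa
    have h1 : 1 ≤ i := Nat.pos_of_ne_zero hne
    rw [gb_of_gt (by omega : ((0:ℕ) : ℤ) + 1 < 2 * (i : ℤ))]
    ring
  · intro h
    exact absurd (Finset.mem_range.mpr (by omega)) h

lemma Gg0 (M : ℕ) : Gg 0 M = 1 := by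
  unfold Gg
  rw [Finset.sum_eq_single 0]
  · unfold Bb
    push_cast
    rw [gb_zero (by omega)]
    have h11 : gb tq (1 : ℤ) 1 = 1 := gb_diag one_sub_tq_zpow_ne (by omega)
    rw [h11]
    norm_num
  · intro i hi hne
    unfold Bb
    have h1 : 1 ≤ i := Nat.pos_of_ne_zero hne
    rw [gb_of_gt (by omega : ((0:ℕ) : ℤ) + 1 < 2 * (i : ℤ) + 1)]
    ring
  · intro h
    exact absurd (Finset.mem_range.mpr (by omega)) h

lemma GgFs : ∀ L M : ℕ,
    Gg L M = gb tq ((L : ℤ) + 2 * (M : ℤ) + 1) (L : ℤ) ∧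
      Fs L M = gb tq ((L : ℤ) + 2 * (M : ℤ)) (L : ℤ) := by
  intro L
  induction L with
  | zero =>
    intro M
    constructor
    · rw [Gg0]
      push_cast
      rw [gb_zero (by omega)]
    · rw [Fs0]
      push_cast
      rw [gb_zero (by omega)]
  | succ L ih =>
    have hG : ∀ M : ℕ, Gg (L + 1) M = gb tq (((L+1 : ℕ) : ℤ) + 2 * (M : ℤ) + 1) ((L+1 : ℕ) : ℤ) := by
      intro M
      induction M with
      | zero =>
        -- Gg (L+1) 0 = Bb (L+1) 0 0
        have hsingle : Gg (L + 1) 0 = Bb (L + 1) 0 0 := by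
          unfold Gg
          rw [Finset.sum_range_one]
        have hBB := lemB L 0 0 (le_refl 0)
        have hDd : Dd (L + 1) 0 0 = 1 := by
          unfold Dd
          rw [show ((L + 1 : ℕ) : ℤ) + ((0:ℕ) : ℤ) - ((0:ℕ) : ℤ) = ((L+1 : ℕ) : ℤ) by push_cast; ring]
          rw [gb_diag one_sub_tq2_zpow_ne (by omega)]
          rw [show (2 : ℤ) * ((0:ℕ) : ℤ) = 0 by norm_num]
          rw [gb_zero (by omega)]
          norm_num
        have hCc : Cc (L + 1) 0 1 = 0 := by
          unfold Cc
          rw [show ((L + 1 : ℕ) : ℤ) + ((0:ℕ) : ℤ) - ((1:ℕ) : ℤ) = (L : ℤ) by push_cast; ring]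
          rw [gb_of_gt (by push_cast; omega : (L : ℤ) < ((L+1 : ℕ) : ℤ))]
          ring
        have hGL : Bb L 0 0 = gb tq ((L : ℤ) + 1) (L : ℤ) := by
          have h0 := (ih 0).1
          unfold Gg at h0
          rw [Finset.sum_range_one] at h0
          rw [h0]
          norm_num
        rw [hsingle, hBB, hDd, hCc, hGL]
        -- goal : 1 + 0 + tq ^ 1 * gb tq (L+1) L = gb tq ((L+1) + 0 + 1) (L+1)
        have hp1 := gb_pascal1 one_sub_tq_zpow_ne tq_ne_zero (n := (L : ℤ) + 1)
          ((L : ℤ) + 1) (by omega)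
        rw [show (L : ℤ) + 1 + 1 - ((L : ℤ) + 1) = ((1 : ℕ) : ℤ) by ring] at hp1
        rw [zpow_natCast, show (L : ℤ) + 1 - 1 = (L : ℤ) by ring,
          gb_diag one_sub_tq_zpow_ne (by omega : (0:ℤ) ≤ (L : ℤ) + 1)] at hp1
        push_cast
        norm_num at hp1 ⊢
        try rw [hp1]
        try ring
      | succ M ihM =>
        rw [sum2 L M, ihM, (ih (M + 1)).1, (ih (M + 1)).2]
        have hp1 := gb_pascal1 one_sub_tq_zpow_ne tq_ne_zero (n := (L : ℤ) + 2 * (M : ℤ) + 3)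
          ((L : ℤ) + 1) (by omega)
        have hp2 := gb_pascal1 one_sub_tq_zpow_ne tq_ne_zero (n := (L : ℤ) + 2 * (M : ℤ) + 2)
          ((L : ℤ) + 1) (by omega)
        rw [show (L : ℤ) + 2 * (M : ℤ) + 3 + 1 - ((L : ℤ) + 1) = ((2 * M + 3 : ℕ) : ℤ)
          by push_cast; ring, zpow_natCast] at hp1
        rw [show (L : ℤ) + 2 * (M : ℤ) + 2 + 1 - ((L : ℤ) + 1) = ((2 * M + 2 : ℕ) : ℤ)
          by push_cast; ring, zpow_natCast] at hp2
        rw [show (L : ℤ) + 1 - 1 = (L : ℤ) by ring] at hp1 hp2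
        push_cast
        rw [show (L : ℤ) + 1 + 2 * ((M : ℤ) + 1) + 1 = (L : ℤ) + 2 * (M : ℤ) + 3 + 1 by ring, hp1]
        rw [show (L : ℤ) + 2 * (M : ℤ) + 3 = (L : ℤ) + 2 * (M : ℤ) + 2 + 1 by ring, hp2]
        try rw [show (L : ℤ) + 1 + 2 * (M : ℤ) + 1 = (L : ℤ) + 2 * (M : ℤ) + 2 by ring]
        try rw [show (L : ℤ) + 2 * ((M : ℤ) + 1) = (L : ℤ) + 2 * (M : ℤ) + 2 by ring]
        try rw [show (L : ℤ) + 2 * ((M : ℤ) + 1) + 1 = (L : ℤ) + 2 * (M : ℤ) + 2 + 1 by ring]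
        try ring
    intro M
    refine ⟨hG M, ?_⟩
    rw [sum1 L M, hG M, (ih M).1]
    have hp1 := gb_pascal1 one_sub_tq_zpow_ne tq_ne_zero (n := (L : ℤ) + 2 * (M : ℤ) + 1)
      ((L : ℤ) + 1) (by omega)
    rw [show (L : ℤ) + 2 * (M : ℤ) + 1 + 1 - ((L : ℤ) + 1) = ((2 * M + 1 : ℕ) : ℤ)
      by push_cast; ring, zpow_natCast] at hp1
    rw [show (L : ℤ) + 1 - 1 = (L : ℤ) by ring] at hp1
    push_cast
    rw [show (L : ℤ) + 1 + 2 * (M : ℤ) + 1 = (L : ℤ) + 2 * (M : ℤ) + 1 + 1 by ring, hp1]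
    rw [show (L : ℤ) + 2 * (M : ℤ) + 1 = (L : ℤ) + 1 + 2 * (M : ℤ) by ring]
    ring

lemma zexp_eq (i : ℕ) :
    (tq ^ ((i : ℤ) * (2 * (i : ℤ) - 1)) : K) = tq ^ (i * (2 * i - 1)) := by
  rw [← zpow_natCast tq (i * (2 * i - 1))]
  congr 1
  cases i with
  | zero => norm_num
  | succ j =>
    rw [show 2 * (j + 1) - 1 = 2 * j + 1 by omega]
    push_cast
    ring

/-- q-Saalschütz corollary:
`Σ_{i=0}^M q^{i(2i-1)/2} [L+M-i choose L]_q [L+1 choose 2i]_{q^{1/2}} = [L+2M choose L]_{q^{1/2}}`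
(stated with `t = q^{1/2}`, so `q = t^2` and `q^{i(2i-1)/2} = t^{i(2i-1)}`). -/
theorem qSaalschutz_cor (L M : ℕ) :
    ∑ i ∈ Finset.range (M + 1),
      tq ^ ((i : ℤ) * (2 * i - 1)) * gb (tq ^ 2) ((L : ℤ) + M - i) L *
        gb tq ((L : ℤ) + 1) (2 * i) =
      gb tq ((L : ℤ) + 2 * M) L := by
  have h : ∀ i ∈ Finset.range (M + 1),
      tq ^ ((i : ℤ) * (2 * i - 1)) * gb (tq ^ 2) ((L : ℤ) + M - i) L *
        gb tq ((L : ℤ) + 1) (2 * i) = Aa L M i := by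
    intro i _
    unfold Aa
    rw [zexp_eq i]
  rw [Finset.sum_congr rfl h]
  exact (GgFs L M).2
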